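/- arXiv:1107.1627 — 5 statements merged into one kernel-verified Lean document; each statement's English description precedes it below -/
import Mathlib

section
/- Let r ≥ 2 and k ≥ 1. There exists a finite field F and elements λ_1, …, λ_k ∈ F such that for every t with 1 ≤ t ≤ r, every injective map i : Fin t → Fin r, and every injective map j : Fin t → Fin k, the block matrix G of size (t·r^k) × (t·r^k) over F (rows and columns indexed by Fin t × (ZMod r)^k) whose (u,v) block equals λ_{j(v)}^{i(u)} · Q_{j(v)}^{i(u)} is invertible. (This is the statement that Construction 1, with parity coefficients λ_j, can be made an MDS code over a large enough finite field.) -/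
/-!
Replace the coefficients `λ_j` by indeterminates `X_j`. For fixed `t, i, j` the determinant
is then a homogeneous polynomial of degree `r^k · ∑ i(u)`, and it is nonzero: in the Leibniz
expansion, the exponent of `X_{j v}` in the term of a permutation is the sum of the row-block
exponents met by column block `v`, so only block-preserving permutations reach the diagonal
monomial `∏_v X_{j v}^{r^k · i(v)}` (compare the largest exponent first), and among those only
the block-diagonal translation has a nonzero term. The product of all these determinants is a
nonzero homogeneous polynomial, so over `ZMod p` with `p` larger than its degree it has a
point where it does not vanish.
-/

open Matrix MvPolynomial Finset Function

def shiftMatrix (R : Type*) [Semiring R] {V : Type*} [AddCommMonoid V] [DecidableEq V] (d : V) :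
    Matrix V V R :=
  of fun x y => if x = y + d then 1 else 0

lemma shiftMatrix_pow (R : Type*) [Semiring R] {V : Type*} [AddCommMonoid V] [DecidableEq V]
    [Fintype V] (d : V) (n : ℕ) : shiftMatrix R d ^ n = shiftMatrix R (n • d) := by
  induction n with
  | zero => ext x y; simp [shiftMatrix, one_apply]
  | succ n ih =>
    ext x y
    rw [pow_succ, ih, mul_apply, Finset.sum_eq_single (y + d)]
    · simp [shiftMatrix, succ_nsmul, add_assoc, add_comm d]
    · intro z _ hz
      simp [shiftMatrix, hz]
    · simp

lemma MvPolynomial.isHomogeneous_det {R σ n : Type*} [CommRing R] [Fintype n] [DecidableEq n]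
    (M : Matrix n n (MvPolynomial σ R)) (w : n → ℕ)
    (hM : ∀ p q, (M p q).IsHomogeneous (w p)) : M.det.IsHomogeneous (∑ p, w p) := by
  rw [det_apply']
  refine IsHomogeneous.sum _ _ _ fun τ _ => ?_
  rw [← map_intCast (C : R →+* MvPolynomial σ R), ← Equiv.sum_comp τ w]
  exact (IsHomogeneous.prod _ _ _ fun q _ => hM _ _).C_mul _

lemma MvPolynomial.exists_eval_ne_zero_of_isHomogeneous {σ F ι : Type*} [Field F] [Fintype F]
    [Fintype ι] (f : ι → MvPolynomial σ F) (n : ι → ℕ) (hf : ∀ a, f a ≠ 0)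
    (hhom : ∀ a, (f a).IsHomogeneous (n a)) (hcard : ∑ a, n a ≤ Fintype.card F) :
    ∃ z : σ → F, ∀ a, eval z (f a) ≠ 0 := by
  have hprod : (∏ a, f a).IsHomogeneous (∑ a, n a) := IsHomogeneous.prod _ _ _ fun a _ => hhom a
  by_contra! hzero
  refine prod_ne_zero_iff.mpr (fun a _ => hf a) (hprod.eq_zero_of_forall_eval_eq_zero_of_le_card
    (fun z => ?_) (by rw [Cardinal.mk_fintype]; exact_mod_cast hcard))
  obtain ⟨a, ha⟩ := hzero z
  rw [map_prod]
  exact prod_eq_zero (mem_univ a) ha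

lemma Finsupp.sum_single_fst_apply_of_injective {σ ι V : Type*} [Fintype ι] [Fintype V]
    {x : ι → σ} (hx : Injective x) (f : ι × V → ℕ) (v : ι) :
    (∑ q : ι × V, Finsupp.single (x q.1) (f q)) (x v) = ∑ y, f (v, y) := by
  classical
  rw [Finsupp.finsetSum_apply, Fintype.sum_prod_type]
  simp [Finsupp.single_apply, hx.eq_iff]

lemma Equiv.Perm.exists_apply_eq_of_fst_eq {ι V : Type*} [Finite V] {τ : Equiv.Perm (ι × V)}
    {u : ι} (hu : ∀ y, (τ (u, y)).1 = u) (z : V) : ∃ y, τ (u, y) = (u, z) := by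
  have hinj : Injective fun y => (τ (u, y)).2 := fun y y' h =>
    congrArg Prod.snd (τ.injective (Prod.ext (by rw [hu, hu]) h))
  obtain ⟨y, hy⟩ := Finite.injective_iff_surjective.mp hinj z
  exact ⟨y, Prod.ext (hu y) hy⟩

/-- A block `v₀` of largest weight among those not mapped into themselves can only receive rows
of weight at most `e v₀`, since heavier blocks are already filled by themselves; the sum
condition then forces equality. -/
lemma Equiv.Perm.fst_apply_eq_of_sum_eq {ι V : Type*} [Fintype ι] [Fintype V]
    (τ : Equiv.Perm (ι × V)) (e : ι → ℕ) (he : Injective e)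
    (h : ∀ v, ∑ y, e (τ (v, y)).1 = ∑ _y : V, e v) (q : ι × V) : (τ q).1 = q.1 := by
  classical
  by_contra hq
  set S := univ.filter fun v => ∃ y, (τ (v, y)).1 ≠ v
  obtain ⟨v₀, hv₀, hmax⟩ := S.exists_max_image e ⟨q.1, by simpa [S] using ⟨q.2, hq⟩⟩
  have hstable : ∀ v, e v₀ < e v → ∀ y, (τ (v, y)).1 = v := fun v hv => by
    by_contra! hS
    exact (hmax v (by simpa [S] using hS)).not_gt hv
  have hle : ∀ y ∈ univ, e (τ (v₀, y)).1 ≤ e v₀ := fun y _ => by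
    by_contra! hlt
    obtain ⟨y', hy'⟩ := τ.exists_apply_eq_of_fst_eq (hstable _ hlt) (τ (v₀, y)).2
    have hu := congrArg Prod.fst (τ.injective hy')
    exact hlt.ne' (congrArg e hu)
  have heq := (Finset.sum_eq_sum_iff_of_le hle).mp (h v₀)
  obtain ⟨y, hy⟩ := (Finset.mem_filter.mp hv₀).2
  exact hy (he (heq y (mem_univ y)))

def diagonalShift {ι V : Type*} [AddGroup V] (e : ι → ℕ) (d : ι → V) : Equiv.Perm (ι × V) :=
  Equiv.prodShear (Equiv.refl ι) fun v => Equiv.addRight (e v • d v)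

lemma diagonalShift_apply {ι V : Type*} [AddGroup V] (e : ι → ℕ) (d : ι → V) (q : ι × V) :
    diagonalShift e d q = (q.1, q.2 + e q.1 • d q.1) :=
  rfl

section GenericBlockMatrix

variable (R : Type*) [CommRing R] {σ ι V : Type*} [DecidableEq V] [AddCommGroup V]

/-- The matrix of the theorem with `λ_{x v}` replaced by the indeterminate `X (x v)`. -/
noncomputable def genericBlockMatrix (e : ι → ℕ) (x : ι → σ) (d : ι → V) :
    Matrix (ι × V) (ι × V) (MvPolynomial σ R) :=
  of fun p q => monomial (Finsupp.single (x q.1) (e p.1)) (shiftMatrix R (e p.1 • d q.1) p.2 q.2)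

variable {R} (e : ι → ℕ) (x : ι → σ) (d : ι → V) [Fintype V]

lemma map_eval_genericBlockMatrix (z : σ → R) :
    (genericBlockMatrix R e x d).map (eval z) =
      of fun p q => z (x q.1) ^ e p.1 * (shiftMatrix R (d q.1) ^ e p.1) p.2 q.2 := by
  ext p q
  simp [genericBlockMatrix, shiftMatrix_pow, eval_monomial, mul_comm]

variable [Fintype ι]

lemma prod_genericBlockMatrix_apply (τ : Equiv.Perm (ι × V)) :
    ∏ q, genericBlockMatrix R e x d (τ q) q =
      monomial (∑ q, Finsupp.single (x q.1) (e (τ q).1))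
        (∏ q, shiftMatrix R (e (τ q).1 • d q.1) (τ q).2 q.2) :=
  (monomial_sum_prod _ _ _).symm

lemma eq_diagonalShift {τ : Equiv.Perm (ι × V)} (hfst : ∀ q, (τ q).1 = q.1)
    (hne : ∏ q, shiftMatrix R (e (τ q).1 • d q.1) (τ q).2 q.2 ≠ 0) : τ = diagonalShift e d := by
  ext q
  · exact hfst q
  · by_contra hq
    refine hne (prod_eq_zero (mem_univ q) (if_neg ?_))
    simpa [hfst, diagonalShift_apply] using hq

variable [DecidableEq ι]

lemma isHomogeneous_det_genericBlockMatrix :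
    (genericBlockMatrix R e x d).det.IsHomogeneous (∑ p : ι × V, e p.1) :=
  isHomogeneous_det _ _ fun _ _ => isHomogeneous_monomial _ (by simp)

lemma coeff_det_genericBlockMatrix (hx : Injective x) (he : Injective e) :
    coeff (∑ q : ι × V, Finsupp.single (x q.1) (e q.1)) (genericBlockMatrix R e x d).det =
      Equiv.Perm.sign (diagonalShift e d) := by
  classical
  rw [det_apply', coeff_sum, sum_eq_single (diagonalShift e d)]
  · rw [← map_intCast (C : R →+* _), coeff_C_mul, prod_genericBlockMatrix_apply, coeff_monomial]
    simp [diagonalShift_apply, shiftMatrix]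
  · intro τ _ hτ
    rw [← map_intCast (C : R →+* _), coeff_C_mul, prod_genericBlockMatrix_apply, coeff_monomial]
    split_ifs with hexp
    · have hfst := τ.fst_apply_eq_of_sum_eq e he fun v => by
        simpa [Finsupp.sum_single_fst_apply_of_injective hx] using congrArg (· (x v)) hexp
      rw [not_not.mp (mt (eq_diagonalShift e d hfst) hτ), mul_zero]
    · rw [mul_zero]
  · simp

lemma det_genericBlockMatrix_ne_zero [Nontrivial R] (hx : Injective x) (he : Injective e) :
    (genericBlockMatrix R e x d).det ≠ 0 := by
  intro h
  have := coeff_det_genericBlockMatrix (R := R) e x d hx he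
  rw [h, coeff_zero] at this
  rcases Int.units_eq_one_or (Equiv.Perm.sign (diagonalShift e d)) with hs | hs <;>
    simp [hs] at this

end GenericBlockMatrix

/-- Construction 1 can be made MDS over a large enough finite field:
there exist a finite field `F` and coefficients `lam j` such that every `t × t`
sub-block matrix `G` (with `(u,v)` block `lam (j v) ^ (i u) • Q (j v) ^ (i u)`,
where `Q j` is the permutation matrix of `x ↦ x + e j` on `(ZMod r)^k`) is invertible. -/
theorem construction1_MDS_over_large_field (r k : ℕ) (hr : 2 ≤ r) :
    haveI : NeZero r := ⟨by omega⟩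
    ∃ (F : Type) (fieldF : Field F) (fintypeF : Fintype F),
      letI := fieldF
      letI := fintypeF
      ∃ lam : Fin k → F,
        ∀ (t : ℕ), 1 ≤ t → t ≤ r →
          ∀ (i : Fin t → Fin r), Function.Injective i →
          ∀ (j : Fin t → Fin k), Function.Injective j →
            IsUnit (Matrix.det (Matrix.of
              fun (p q : Fin t × (Fin k → ZMod r)) =>
                lam (j q.1) ^ (i p.1 : ℕ) *
                  ((Matrix.of fun (x y : Fin k → ZMod r) =>
                      if x = y + Pi.single (j q.1) 1 then (1 : F) else 0) ^
                    (i p.1 : ℕ)) p.2 q.2)) := by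
  have : NeZero r := ⟨by omega⟩
  let A := Σ t : Fin (r + 1), (Fin t ↪ Fin r) × (Fin t ↪ Fin k)
  let N (F : Type) [Field F] (a : A) := genericBlockMatrix F (fun v => (a.2.1 v : ℕ)) a.2.2
    fun v => (Pi.single (a.2.2 v) 1 : Fin k → ZMod r)
  let deg (a : A) := ∑ p : Fin a.1 × (Fin k → ZMod r), (a.2.1 p.1 : ℕ)
  obtain ⟨p, hpdeg, hp⟩ := Nat.exists_infinite_primes (∑ a, deg a)
  have : Fact p.Prime := ⟨hp⟩
  obtain ⟨lam, hlam⟩ := exists_eval_ne_zero_of_isHomogeneous (fun a => (N (ZMod p) a).det) deg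
    (fun a => det_genericBlockMatrix_ne_zero _ _ _ a.2.2.injective
      (Fin.val_injective.comp a.2.1.injective))
    (fun a => isHomogeneous_det_genericBlockMatrix _ _ _) (by rwa [ZMod.card])
  refine ⟨ZMod p, inferInstance, inferInstance, lam, fun t _ ht i hi j hj => ?_⟩
  have hdet := hlam ⟨⟨t, by omega⟩, ⟨i, hi⟩, ⟨j, hj⟩⟩
  rw [RingHom.map_det, RingHom.mapMatrix_apply, map_eval_genericBlockMatrix] at hdet
  exact isUnit_iff_ne_zero.mpr hdet
end

section
/- Let F be a field, r ≥ 1, n ≥ 1, and let S be the r × r cyclic shift permutation matrix over F defined by S_{a,b} = 1 if a = b + 1 (mod r) and 0 otherwise. Let t ≤ r, let i : Fin t → Fin r be injective, and let q_1, …, q_t be arbitrary n × n matrices over F. Then the block matrix G (indexed by Fin t × (Fin r × Fin n)) whose (u,v) block is the Kronecker product S^{i(u)} ⊗ q_v^{i(u)} is invertible if and only if the block matrix H (indexed by Fin t × Fin n) whose (u,v) block is q_v^{i(u)} is invertible. (This is the structural content of Lemma 1: a code of Construction 1 built from big blocks P_j = S ⊗ p_j is MDS if and only if every t × t sub block matrix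 of H' = [p_j^i] is invertible.) -/
/-!
`S ^ k` is the permutation matrix of `x ↦ x - k`. Permuting the rows of the `u`-th row block of
`G` by the inverse of that shift turns each block `S ^ k ⊗ B` into `1 ⊗ B`, so up to a row
permutation and a simultaneous reindexing `G` is the Kronecker product `1 ⊗ H`, and
`det G = ± (det H) ^ r`.
-/

open Equiv Matrix
open scoped Kronecker

namespace Matrix

theorem permMatrix_pow {n R : Type*} [DecidableEq n] [Fintype n] [Semiring R] (σ : Perm n)
    (k : ℕ) : (σ ^ k).permMatrix R = σ.permMatrix R ^ k := by
  induction k with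
  | zero => simp
  | succ k ih => rw [pow_succ, permMatrix_mul, ih, pow_succ']

theorem permMatrix_subRight (R : Type*) [Zero R] [One R] {G : Type*} [AddGroup G]
    [DecidableEq G] (g : G) :
    Perm.permMatrix R (Equiv.subRight g) = of fun a b => if a = b + g then 1 else 0 := by
  ext a b
  simp [PEquiv.toMatrix_apply, sub_eq_iff_eq_add]

end Matrix

theorem Equiv.subRight_pow {G : Type*} [AddGroup G] (g : G) (k : ℕ) :
    Equiv.subRight g ^ k = Equiv.subRight (k • g) := by
  induction k with
  | zero => ext; simp
  | succ k ih => ext x; simp [pow_succ, ih, succ_nsmul, sub_add_eq_sub_sub_swap]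

open Fin.NatCast in
theorem cyclicShift_pow_val (F : Type*) [Semiring F] {r : ℕ} [NeZero r] (k : Fin r) :
    (of fun a b : Fin r => if a = b + 1 then (1 : F) else 0) ^ (k : ℕ) =
      Perm.permMatrix F (Equiv.subRight k) := by
  rw [← permMatrix_subRight, ← permMatrix_pow, Equiv.subRight_pow, nsmul_one,
    Fin.cast_val_eq_self]

namespace Matrix

variable {R ι κ m : Type*} [CommRing R] [Fintype ι] [DecidableEq ι] [Fintype κ] [DecidableEq κ]
  [Fintype m] [DecidableEq m]

theorem det_permMatrix_kronecker_blocks (σ : ι → Perm κ) (B : Matrix (ι × m) (ι × m) R) :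
    (of fun p p' : ι × κ × m =>
        (σ p.1).permMatrix R p.2.1 p'.2.1 * B (p.1, p.2.2) (p'.1, p'.2.2)).det =
      (∏ u, Perm.sign (σ u) ^ Fintype.card m : ℤˣ) * B.det ^ Fintype.card κ := by
  set G := of fun p p' : ι × κ × m =>
    (σ p.1).permMatrix R p.2.1 p'.2.1 * B (p.1, p.2.2) (p'.1, p'.2.2)
  let e : Perm (ι × κ × m) := prodCongrRight fun u => prodCongrLeft fun _ => (σ u)⁻¹
  let f : ι × κ × m ≃ κ × ι × m :=
    ⟨fun p => (p.2.1, p.1, p.2.2), fun p => (p.2.1, p.1, p.2.2), fun _ => rfl, fun _ => rfl⟩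
  have hG : G.submatrix e id = ((1 : Matrix κ κ R) ⊗ₖ B).submatrix f f := by
    ext ⟨u, a, x⟩ ⟨v, b, y⟩
    simp [G, e, f, PEquiv.toMatrix_apply, one_apply, eq_comm]
  have hperm := det_permute e G
  rw [hG, det_submatrix_equiv_self, det_kronecker, det_one, one_pow, one_mul] at hperm
  have hsign : Perm.sign e = ∏ u, Perm.sign (σ u) ^ Fintype.card m := by
    simp [e, Perm.sign_prodCongrRight, Perm.sign_prodCongrLeft]
  rw [hperm, ← hsign, ← mul_assoc, ← Int.cast_mul, ← Units.val_mul, Int.units_mul_self,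
    Units.val_one, Int.cast_one, one_mul]

theorem isUnit_det_permMatrix_kronecker_blocks_iff [Nonempty κ] (σ : ι → Perm κ)
    (B : Matrix (ι × m) (ι × m) R) :
    IsUnit (of fun p p' : ι × κ × m =>
        (σ p.1).permMatrix R p.2.1 p'.2.1 * B (p.1, p.2.2) (p'.1, p'.2.2)).det ↔
      IsUnit B.det := by
  rw [det_permMatrix_kronecker_blocks, IsUnit.mul_iff, isUnit_pow_iff Fintype.card_ne_zero]
  exact and_iff_right ((Units.isUnit _).map (Int.castRingHom R))

end Matrix

/-- structural content of Lemma 1. With `S` the `r × r` cyclic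
shift matrix, the block matrix `G` whose `(u,v)` block is the Kronecker product
`S ^ (i u) ⊗ (q v) ^ (i u)` is invertible if and only if the block matrix `H`
whose `(u,v)` block is `(q v) ^ (i u)` is invertible. -/
theorem kronecker_shift_block_invertible_iff (F : Type*) [Field F]
    (r n : ℕ) (hr : 1 ≤ r)
    (t : ℕ) (i : Fin t → Fin r)
    (q : Fin t → Matrix (Fin n) (Fin n) F) :
    haveI : NeZero r := ⟨by omega⟩
    let S : Matrix (Fin r) (Fin r) F :=
      Matrix.of fun a b => if a = b + 1 then 1 else 0
    (IsUnit (Matrix.det (Matrix.of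
        fun (p p' : Fin t × (Fin r × Fin n)) =>
          (S ^ (i p.1 : ℕ)) p.2.1 p'.2.1 * ((q p'.1) ^ (i p.1 : ℕ)) p.2.2 p'.2.2)) ↔
      IsUnit (Matrix.det (Matrix.of
        fun (p p' : Fin t × Fin n) =>
          ((q p'.1) ^ (i p.1 : ℕ)) p.2 p'.2))) := by
  have : NeZero r := ⟨by omega⟩
  intro S
  simp only [S, cyclicShift_pow_val]
  exact isUnit_det_permMatrix_kronecker_blocks_iff (fun u => Equiv.subRight (i u))
    (of fun p p' => (q p'.1 ^ (i p.1 : ℕ)) p.2 p'.2)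
end

section
/- Let F be a field, α ∈ F with α ≠ 0 and α ≠ 1, r ≥ 2, m ≥ 1, n ≥ 1, and let p_1, …, p_m be n × n matrices over F. Suppose that for every t with 1 ≤ t ≤ r, every injective i : Fin t → Fin r, and every injective j : Fin t → Fin m, the block matrix (indexed by Fin t × Fin n) whose (u,v) block is p_{j(v)}^{i(u)} is invertible. Then for every t with 1 ≤ t ≤ r, every injective i : Fin t → Fin r, and every injective j : Fin t → Fin m, the block matrix (indexed by Fin t × (Fin r × Fin n)) whose (u,v) block is A_{j(v)}^{i(u)} is invertible. (That is, if Construction 1 with permutation blocks p_j is MDS, then Construction 2 with parity matrices A_j^i is also MDS.) -/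
/-- The parity matrix `A^i` of Construction 2, built from the `n × n` matrix `p`
over a field, with blocks indexed by `Fin r × Fin r`. Writing `d = (x - i) mod r`,
the `(x, i)` block is `p ^ d`; for `x ≠ i` the `(x, x)` block is `β(x,i) • p ^ (r - d)`
where `β(x,i) = α` if (`2d < r`, or `2d = r` and `2i < r`) and `β(x,i) = 1` otherwise;
all other blocks are `0`. -/
def Ablock {F : Type*} [Field F] {r n : ℕ} (α : F)
    (p : Matrix (Fin n) (Fin n) F) (i : Fin r) :
    Matrix (Fin r × Fin n) (Fin r × Fin n) F :=
  Matrix.of fun xa yb =>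
    let d : ℕ := ((xa.1 : ℕ) + r - (i : ℕ)) % r
    if yb.1 = i then (p ^ d) xa.2 yb.2
    else if yb.1 = xa.1 then
      (if 2 * d < r ∨ (2 * d = r ∧ 2 * (i : ℕ) < r) then α else 1) *
        (p ^ (r - d)) xa.2 yb.2
    else 0

/-!
Suppose `M *ᵥ w = 0` for the Construction 2 matrix `M`, and let `Y_y` be the `y`-th block
component of `w`. With `L_k = [q_1^k ⋯ q_t^k]` and exponents read in `Fin r` (cyclically), the row
`(u, x)` of `M *ᵥ w = 0` says `L_{x - i_u} Y_{i_u} + β(x, i_u) L_{i_u - x} Y_x = 0`, the second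
term being present only for `x ≠ i_u`. Combining the rows `(u, i_{u'})` and `(u', i_u)` and using
`β(x, i) β(i, x) = α ≠ 1` gives `L_{i_{u'} - i_u} Y_{i_u} = 0` for all `u'`; the exponents
`i_{u'} - i_u` are distinct, so Construction 1 being MDS forces `Y_{i_u} = 0`. For `y` outside the
image of `i`, the rows `(u, y)` then reduce to `β L_{i_u - y} Y_y = 0` with `β ≠ 0`, and the same
argument gives `Y_y = 0`.
-/

open Matrix

namespace Fin

variable {r : ℕ}

lemma val_sub_eq_add_sub_mod (x i : Fin r) : ((x - i : Fin r) : ℕ) = ((x : ℕ) + r - i) % r := by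
  rw [Fin.val_sub]
  congr 1
  omega

lemma val_sub_cases (a b : Fin r) :
    (b ≤ a ∧ ((a - b : Fin r) : ℕ) = a - b) ∨ (a < b ∧ ((a - b : Fin r) : ℕ) = r + a - b) := by
  rcases le_or_gt b a with h | h
  · exact .inl ⟨h, Fin.coe_sub_iff_le.2 h⟩
  · exact .inr ⟨h, Fin.coe_sub_iff_lt.2 h⟩

lemma val_sub_add_val_sub {a b : Fin r} (h : a ≠ b) :
    ((a - b : Fin r) : ℕ) + ((b - a : Fin r) : ℕ) = r := by
  have := Fin.val_ne_of_ne h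
  rcases val_sub_cases a b with ⟨h1, e1⟩ | ⟨h1, e1⟩ <;>
    rcases val_sub_cases b a with ⟨h2, e2⟩ | ⟨h2, e2⟩ <;> omega

end Fin

namespace MDSConstruction

variable {F : Type*} [Field F] {ι : Type*} [Fintype ι] {r n : ℕ}

def betaCoeff (α : F) (x i : Fin r) : F :=
  if 2 * ((x - i : Fin r) : ℕ) < r ∨ (2 * ((x - i : Fin r) : ℕ) = r ∧ 2 * (i : ℕ) < r) then α
  else 1

lemma betaCoeff_ne_zero {α : F} (hα : α ≠ 0) (x i : Fin r) : betaCoeff α x i ≠ 0 := by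
  unfold betaCoeff
  split_ifs <;> simp [hα]

lemma betaCoeff_mul_betaCoeff (α : F) {x i : Fin r} (h : x ≠ i) :
    betaCoeff α x i * betaCoeff α i x = α := by
  have := Fin.val_ne_of_ne h
  unfold betaCoeff
  rcases Fin.val_sub_cases x i with ⟨h1, e1⟩ | ⟨h1, e1⟩ <;>
    rcases Fin.val_sub_cases i x with ⟨h2, e2⟩ | ⟨h2, e2⟩ <;>
      rw [e1, e2] <;> split_ifs <;> first | (exfalso; omega) | simp

def powRow (q : ι → Matrix (Fin n) (Fin n) F) (k : ℕ) : Matrix (Fin n) (ι × Fin n) F :=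
  Matrix.of fun a c => (q c.1 ^ k) a c.2

def construction1Matrix (q : ι → Matrix (Fin n) (Fin n) F) (e : ι → ℕ) :
    Matrix (ι × Fin n) (ι × Fin n) F :=
  Matrix.of fun u v => (q v.1 ^ e u.1) u.2 v.2

def construction2Matrix (α : F) (q : ι → Matrix (Fin n) (Fin n) F) (i : ι → Fin r) :
    Matrix (ι × (Fin r × Fin n)) (ι × (Fin r × Fin n)) F :=
  Matrix.of fun u v => Ablock α (q v.1) (i u.1) u.2 v.2

def slice (w : ι × (Fin r × Fin n) → F) (y : Fin r) : ι × Fin n → F :=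
  fun c => w (c.1, (y, c.2))

lemma eq_zero_of_powRow_mulVec_eq_zero [DecidableEq ι] {q : ι → Matrix (Fin n) (Fin n) F}
    {e : ι → ℕ} (he : IsUnit (construction1Matrix q e).det) {Y : ι × Fin n → F}
    (hY : ∀ u, powRow q (e u) *ᵥ Y = 0) : Y = 0 :=
  eq_zero_of_mulVec_eq_zero he.ne_zero (funext fun c => congrFun (hY c.1) c.2)

lemma Ablock_apply (α : F) (P : Matrix (Fin n) (Fin n) F) (i x y : Fin r) (a b : Fin n) :
    Ablock α P i (x, a) (y, b) =
      (if y = i then (P ^ ((x - i : Fin r) : ℕ)) a b else 0) +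
        if x = i then 0
        else if y = x then betaCoeff α x i * (P ^ ((i - x : Fin r) : ℕ)) a b else 0 := by
  simp only [Ablock, of_apply, betaCoeff, ← Fin.val_sub_eq_add_sub_mod]
  by_cases hxi : x = i
  · subst hxi
    by_cases hyx : y = x <;> simp [hyx]
  · have hcomp : r - ((x - i : Fin r) : ℕ) = ((i - x : Fin r) : ℕ) := by
      have := Fin.val_sub_add_val_sub hxi
      omega
    rw [hcomp]
    by_cases hyi : y = i
    · simp [hyi, Ne.symm hxi]
    · simp [hyi, hxi]

lemma construction2Matrix_mulVec_apply (α : F) (q : ι → Matrix (Fin n) (Fin n) F)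
    (i : ι → Fin r) (w : ι × (Fin r × Fin n) → F) (u : ι) (x : Fin r) (a : Fin n) :
    (construction2Matrix α q i *ᵥ w) (u, (x, a)) =
      (powRow q (x - i u : Fin r) *ᵥ slice w (i u)) a +
        if x = i u then 0
        else betaCoeff α x (i u) * (powRow q (i u - x : Fin r) *ᵥ slice w x) a := by
  by_cases hx : x = i u <;>
    simp [construction2Matrix, mulVec, dotProduct, Ablock_apply, Fintype.sum_prod_type, add_mul,
      ite_mul, mul_assoc, Finset.sum_add_distrib, Finset.mul_sum, hx, powRow, slice]

section Kernel

variable {α : F} {q : ι → Matrix (Fin n) (Fin n) F} {i : ι → Fin r} {w : ι × (Fin r × Fin n) → F}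

lemma powRow_mulVec_slice_image_eq_zero (hα1 : α ≠ 1) (hw : construction2Matrix α q i *ᵥ w = 0)
    (u u' : ι) : powRow q (i u' - i u : Fin r) *ᵥ slice w (i u) = 0 := by
  funext a
  have h1 := construction2Matrix_mulVec_apply α q i w u (i u') a
  rw [hw, Pi.zero_apply] at h1
  by_cases hne : i u' = i u
  · simpa [hne] using h1.symm
  have h2 := construction2Matrix_mulVec_apply α q i w u' (i u) a
  rw [hw, Pi.zero_apply, if_neg (Ne.symm hne)] at h2
  rw [if_neg hne] at h1
  have hβ := betaCoeff_mul_betaCoeff α hne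
  set z := (powRow q (i u' - i u : Fin r) *ᵥ slice w (i u)) a
  have hz : (1 - α) * z = 0 := by
    linear_combination betaCoeff α (i u') (i u) * h2 - h1 + z * hβ
  exact (mul_eq_zero.1 hz).resolve_left (sub_ne_zero.2 hα1.symm)

lemma powRow_mulVec_slice_eq_zero_of_ne (hα0 : α ≠ 0) (hw : construction2Matrix α q i *ᵥ w = 0)
    {u : ι} (hu : slice w (i u) = 0) {y : Fin r} (hy : y ≠ i u) :
    powRow q (i u - y : Fin r) *ᵥ slice w y = 0 := by
  funext a
  have h := construction2Matrix_mulVec_apply α q i w u y a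
  rw [hw, Pi.zero_apply, hu, if_neg hy, mulVec_zero] at h
  simpa [betaCoeff_ne_zero hα0] using h.symm

theorem isUnit_det_construction2Matrix [DecidableEq ι] [NeZero r] (hα0 : α ≠ 0) (hα1 : α ≠ 1)
    (hi : Function.Injective i)
    (hq : ∀ e : ι → Fin r, Function.Injective e →
      IsUnit (construction1Matrix q fun u => (e u : ℕ)).det) :
    IsUnit (construction2Matrix α q i).det := by
  rw [isUnit_iff_ne_zero]
  intro hdet
  obtain ⟨w, hw0, hw⟩ := exists_mulVec_eq_zero_iff.2 hdet
  have himage : ∀ u, slice w (i u) = 0 := fun u =>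
    eq_zero_of_powRow_mulVec_eq_zero (hq (fun u' => i u' - i u) (sub_left_injective.comp hi))
      (powRow_mulVec_slice_image_eq_zero hα1 hw u)
  have hslice : ∀ y, slice w y = 0 := by
    intro y
    by_cases hy : ∃ u, i u = y
    · obtain ⟨u, rfl⟩ := hy
      exact himage u
    · push Not at hy
      exact eq_zero_of_powRow_mulVec_eq_zero (hq (fun u => i u - y) (sub_left_injective.comp hi))
        fun u => powRow_mulVec_slice_eq_zero_of_ne hα0 hw (himage u) (hy u).symm
  exact hw0 (funext fun c => congrFun (hslice c.2.1) (c.1, c.2.2))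

end Kernel

end MDSConstruction

theorem construction2_MDS_of_construction1_MDS_general (F : Type*) [Field F]
    (α : F) (hα0 : α ≠ 0) (hα1 : α ≠ 1)
    (r m n : ℕ)
    (p : Fin m → Matrix (Fin n) (Fin n) F)
    (hMDS : ∀ (t : ℕ), 1 ≤ t → t ≤ r →
      ∀ (i : Fin t → Fin r), Function.Injective i →
      ∀ (j : Fin t → Fin m), Function.Injective j →
        IsUnit (Matrix.det (Matrix.of
          fun (u v : Fin t × Fin n) => (p (j v.1) ^ (i u.1 : ℕ)) u.2 v.2))) :
    ∀ (t : ℕ), 1 ≤ t → t ≤ r →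
      ∀ (i : Fin t → Fin r), Function.Injective i →
      ∀ (j : Fin t → Fin m), Function.Injective j →
        IsUnit (Matrix.det (Matrix.of
          fun (u v : Fin t × (Fin r × Fin n)) =>
            Ablock α (p (j v.1)) (i u.1) u.2 v.2)) := by
  intro t ht1 htr i hi j hj
  have : NeZero r := ⟨(i ⟨0, ht1⟩).pos.ne'⟩
  exact MDSConstruction.isUnit_det_construction2Matrix (q := fun v => p (j v)) hα0 hα1 hi
    fun e he => hMDS t ht1 htr e he j hj

/-- If every `t × t` sub-block matrix of `[p_j ^ i]` is invertible
(i.e. Construction 1 built from the `p_j` is MDS), then every `t × t` sub-block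
matrix built from the parity matrices `A_j^i` of Construction 2 is invertible
(i.e. Construction 2 is MDS). -/
theorem construction2_MDS_of_construction1_MDS (F : Type*) [Field F]
    (α : F) (hα0 : α ≠ 0) (hα1 : α ≠ 1)
    (r m n : ℕ) (hr : 2 ≤ r) (hm : 1 ≤ m) (hn : 1 ≤ n)
    (p : Fin m → Matrix (Fin n) (Fin n) F)
    (hMDS : ∀ (t : ℕ), 1 ≤ t → t ≤ r →
      ∀ (i : Fin t → Fin r), Function.Injective i →
      ∀ (j : Fin t → Fin m), Function.Injective j →
        IsUnit (Matrix.det (Matrix.of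
          fun (u v : Fin t × Fin n) => (p (j v.1) ^ (i u.1 : ℕ)) u.2 v.2))) :
    ∀ (t : ℕ), 1 ≤ t → t ≤ r →
      ∀ (i : Fin t → Fin r), Function.Injective i →
      ∀ (j : Fin t → Fin m), Function.Injective j →
        IsUnit (Matrix.det (Matrix.of
          fun (u v : Fin t × (Fin r × Fin n)) =>
            Ablock α (p (j v.1)) (i u.1) u.2 v.2)) :=
  construction2_MDS_of_construction1_MDS_general F α hα0 hα1 r m n p hMDS
end

section
/- Let F be a field, α ∈ F with α ≠ 0 and α ≠ 1, r ≥ 2, n ≥ 1, p an n × n matrix over F, and A^i (for i ∈ Fin r) the parity matrices of Construction 2 built from p. Let i, i' ∈ Fin r, set d = (i' − i) mod r, and suppose d ≥ 1 and (2d < r, or 2d = r and 2i < r). Then the row block i' of A^i and the row block i of A^{i'} agree as follows: for every block column y ∉ {i, i'}, both the (i', y) block of A^i and the (i, y) block of A^{i'} are the zero matrix; the (i', i) block of A^i and the (i, i) block of A^{i'} both equal p^{d}; the (i', i') block of A^i equals α·p^{r−d}; and the (i, i') block of A^{i'} equals p^{r−d}. (This is equation (2), stating that these two rows are identical except for the coefficient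 α.) -/
/-!
With `d = (i' - i) mod r`, the exponents in row block `i'` of `A^i` are `d` and `r - d`, and
in row block `i` of `A^{i'}` they are `(i - i') mod r = r - d` and `d`. What remains is the
coefficient: the condition selecting `α` holds for the pair `(i', i)` by hypothesis and fails
for the swapped pair, since `r - d` exceeds `r / 2` unless `2d = r`, and then exactly one of
`i, i'` lies below `r / 2`.
-/

namespace Fin

variable {r : ℕ}

theorem val_add_sub_mod (x i : Fin r) : ((x : ℕ) + r - i) % r = ((x - i : Fin r) : ℕ) := by
  rw [Fin.val_sub]
  congr 1
  omega

theorem val_sub_add_val_sub_of_ne {x i : Fin r} (h : x ≠ i) :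
    ((x - i : Fin r) : ℕ) + ((i - x : Fin r) : ℕ) = r := by
  rcases lt_or_gt_of_ne h with hlt | hgt
  · rw [coe_sub_iff_lt.2 hlt, sub_val_of_le hlt.le]
    omega
  · rw [sub_val_of_le hgt.le, coe_sub_iff_lt.2 hgt]
    omega

theorem not_half_cond_sub_swap {x i : Fin r} (h : x ≠ i)
    (hcond : 2 * ((x - i : Fin r) : ℕ) < r ∨ (2 * ((x - i : Fin r) : ℕ) = r ∧ 2 * (i : ℕ) < r)) :
    ¬ (2 * ((i - x : Fin r) : ℕ) < r ∨ (2 * ((i - x : Fin r) : ℕ) = r ∧ 2 * (x : ℕ) < r)) := by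
  have hsum := val_sub_add_val_sub_of_ne h
  rcases le_or_gt i x with hle | hlt
  · have := sub_val_of_le hle
    omega
  · have := coe_sub_iff_lt.2 hlt
    omega

end Fin

section Ablock

variable {F : Type*} [Field F] {r n : ℕ} (α : F) (p : Matrix (Fin n) (Fin n) F) (i : Fin r)

theorem Ablock_apply_of_ne {x y : Fin r} (hyi : y ≠ i) (hyx : y ≠ x) (a b : Fin n) :
    Ablock α p i (x, a) (y, b) = 0 := by
  simp [Ablock, hyi, hyx]

theorem Ablock_apply_self_col (x : Fin r) (a b : Fin n) :
    Ablock α p i (x, a) (i, b) = (p ^ ((x - i : Fin r) : ℕ)) a b := by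
  simp [Ablock, Fin.val_add_sub_mod]

theorem Ablock_apply_diag {x : Fin r} (hx : x ≠ i) (a b : Fin n) :
    Ablock α p i (x, a) (x, b) =
      (if 2 * ((x - i : Fin r) : ℕ) < r ∨ (2 * ((x - i : Fin r) : ℕ) = r ∧ 2 * (i : ℕ) < r)
        then α else 1) * (p ^ (r - ((x - i : Fin r) : ℕ))) a b := by
  simp [Ablock, hx, Fin.val_add_sub_mod]

end Ablock

theorem construction2_row_comparison_general (F : Type*) [Field F]
    (α : F)
    (r n : ℕ)
    (p : Matrix (Fin n) (Fin n) F) (i i' : Fin r) :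
    let d : ℕ := ((i' : ℕ) + r - (i : ℕ)) % r
    1 ≤ d → (2 * d < r ∨ (2 * d = r ∧ 2 * (i : ℕ) < r)) →
      (∀ y : Fin r, y ≠ i → y ≠ i' → ∀ (a b : Fin n),
          Ablock α p i (i', a) (y, b) = 0 ∧ Ablock α p i' (i, a) (y, b) = 0) ∧
      (∀ a b : Fin n, Ablock α p i (i', a) (i, b) = (p ^ d) a b) ∧
      (∀ a b : Fin n, Ablock α p i' (i, a) (i, b) = (p ^ d) a b) ∧
      (∀ a b : Fin n, Ablock α p i (i', a) (i', b) = α * (p ^ (r - d)) a b) ∧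
      (∀ a b : Fin n, Ablock α p i' (i, a) (i', b) = (p ^ (r - d)) a b) := by
  intro d hd hcond
  have hne : i' ≠ i := by
    rintro rfl
    simp [d] at hd
  have hd_eq : d = ((i' - i : Fin r) : ℕ) := Fin.val_add_sub_mod i' i
  rw [hd_eq] at hcond ⊢
  have hswap : ((i - i' : Fin r) : ℕ) = r - ((i' - i : Fin r) : ℕ) := by
    have := Fin.val_sub_add_val_sub_of_ne hne
    omega
  refine ⟨fun y hyi hyi' a b => ⟨Ablock_apply_of_ne α p i hyi hyi' a b,
      Ablock_apply_of_ne α p i' hyi' hyi a b⟩, Ablock_apply_self_col α p i i', fun a b => ?_,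
    fun a b => ?_, fun a b => ?_⟩
  · rw [Ablock_apply_diag α p i' hne.symm, if_neg (Fin.not_half_cond_sub_swap hne hcond), one_mul,
      hswap, Nat.sub_sub_self (i' - i).isLt.le]
  · rw [Ablock_apply_diag α p i hne, if_pos hcond]
  · rw [Ablock_apply_self_col, hswap]

/-- equation (2). For `d = (i' - i) mod r` with `d ≥ 1` and
(`2d < r`, or `2d = r` and `2i < r`), row block `i'` of `A^i` and row block `i`
of `A^{i'}` agree except for the coefficient `α`: both vanish outside block
columns `i, i'`; both have block `p ^ d` in column `i`; in column `i'`, `A^i`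
has block `α • p ^ (r-d)` while `A^{i'}` has block `p ^ (r-d)`. -/
theorem construction2_row_comparison (F : Type*) [Field F]
    (α : F) (hα0 : α ≠ 0) (hα1 : α ≠ 1)
    (r n : ℕ) (hr : 2 ≤ r) (hn : 1 ≤ n)
    (p : Matrix (Fin n) (Fin n) F) (i i' : Fin r) :
    let d : ℕ := ((i' : ℕ) + r - (i : ℕ)) % r
    1 ≤ d → (2 * d < r ∨ (2 * d = r ∧ 2 * (i : ℕ) < r)) →
      (∀ y : Fin r, y ≠ i → y ≠ i' → ∀ (a b : Fin n),
          Ablock α p i (i', a) (y, b) = 0 ∧ Ablock α p i' (i, a) (y, b) = 0) ∧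
      (∀ a b : Fin n, Ablock α p i (i', a) (i, b) = (p ^ d) a b) ∧
      (∀ a b : Fin n, Ablock α p i' (i, a) (i, b) = (p ^ d) a b) ∧
      (∀ a b : Fin n, Ablock α p i (i', a) (i', b) = α * (p ^ (r - d)) a b) ∧
      (∀ a b : Fin n, Ablock α p i' (i, a) (i', b) = (p ^ (r - d)) a b) :=
  construction2_row_comparison_general F α r n p i i'
end

section
/- Let k ≥ 2 and work over the field F_3 = ZMod 3. For j ∈ {1, …, k}, define the matrix Q_j with rows and columns indexed by (ZMod 2)^k by: (Q_j)_{x,y} = 2 if x = y + e_j and y_1 + y_2 + ⋯ + y_j = 0 in ZMod 2; (Q_j)_{x,y} = 1 if x = y + e_j and y_1 + ⋯ + y_j ≠ 0; and (Q_j)_{x,y} = 0 otherwise. Then each Q_j is invertible, and for all j ≠ j' in {1, …, k}, the 2·2^k × 2·2^k block matrix [[I, I], [Q_j, Q_{j'}]] is invertible (equivalently, Q_{j'} − Q_j is invertible). That is, with r = 2 parities, this coefficient assignment over the field of size 3 makes Construction 1 an MDS code. -/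
/-!
Write `Q j = -P j`, where `P j` is the permutation matrix of `y ↦ y + e j` twisted by
`χ ∘ S j`, with `S j` the linear form `y ↦ y 1 + ⋯ + y j` and `χ : ZMod 2 → F_3` the sign
character. Twisted shifts multiply like a twisted group algebra:
`P(v, φ) * P(w, ψ) = χ (φ w) • P(v + w, φ + ψ)`. In characteristic two all shifts and forms
have order two, so `(P j)² = χ (S j (e j)) = -1` and, for `j ≠ j'`,
`(P j' * P j)² = χ ((S j + S j') (e j + e j')) = χ 1 = -1`, because exactly one of `j ≤ j'`
and `j' ≤ j` holds. Two matrices with `A² = (BA)² = -1` satisfy `(B - A)(ABA - A) = -2`,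
a unit in `F_3`, and the block determinant reduces to `det (Q j' - Q j)`.
-/

open Matrix

theorem sub_mul_eq_neg_two_of_mul_self_eq_neg_one {R : Type*} [Ring R] {A B : R}
    (hA : A * A = -1) (hBA : B * A * (B * A) = -1) :
    (B - A) * (A * B * A - A) = -2 :=
  calc (B - A) * (A * B * A - A) = B * A * (B * A) - B * A - A * A * (B * A) + A * A := by
        noncomm_ring
    _ = -2 := by rw [hA, hBA, neg_one_mul, sub_neg_eq_add, sub_add_cancel]; norm_num

theorem Matrix.isUnit_det_sub_of_mul_self_eq_neg_one {n K : Type*} [Fintype n] [DecidableEq n]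
    [CommRing K] (h2 : IsUnit (2 : K)) {A B : Matrix n n K}
    (hA : A * A = -1) (hBA : B * A * (B * A) = -1) : IsUnit (B - A).det := by
  have htwo : (2 : Matrix n n K) = (2 : K) • 1 := by rw [two_smul, one_add_one_eq_two]
  have hdet := congrArg det (sub_mul_eq_neg_two_of_mul_self_eq_neg_one hA hBA)
  rw [det_mul, htwo, det_neg, det_smul, det_one, mul_one] at hdet
  exact isUnit_of_mul_isUnit_left (hdet ▸ (isUnit_one.neg.pow _).mul (h2.pow _))

section TwistedShift

variable {G A R : Type*} [AddCommMonoid G] [DecidableEq G] [AddCommMonoid A]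
  [CommRing R] (χ : AddChar A R)

def twistedShift (v : G) (φ : G →+ A) : Matrix G G R :=
  of fun x y => if x = y + v then χ (φ y) else 0

theorem twistedShift_mul_twistedShift [Fintype G] (v w : G) (φ ψ : G →+ A) :
    twistedShift χ v φ * twistedShift χ w ψ =
      χ (φ w) • twistedShift χ (v + w) (φ + ψ) := by
  ext x z
  simp only [twistedShift, mul_apply, of_apply, Matrix.smul_apply, smul_eq_mul]
  rw [Finset.sum_eq_single (z + w) (fun y _ hy => by rw [if_neg hy, mul_zero])
    (fun h => absurd (Finset.mem_univ _) h)]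
  have hchar : χ (φ (z + w)) * χ (ψ z) = χ (φ w) * χ ((φ + ψ) z) := by
    simp only [map_add, AddMonoidHom.add_apply, AddChar.map_add_eq_mul]
    ring
  by_cases hx : x = z + (v + w)
  · rw [if_pos (hx.trans (by abel)), if_pos rfl, if_pos hx, hchar]
  · rw [if_neg (fun h => hx (h.trans (by abel))), if_neg hx, zero_mul, mul_zero]

theorem twistedShift_zero_zero : twistedShift χ (0 : G) 0 = 1 := by
  ext x y
  simp [twistedShift, one_apply]

theorem twistedShift_mul_self [Fintype G] {v : G} {φ : G →+ A} (hv : v + v = 0)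
    (hφ : φ + φ = 0) :
    twistedShift χ v φ * twistedShift χ v φ = χ (φ v) • 1 := by
  rw [twistedShift_mul_twistedShift, hv, hφ, twistedShift_zero_zero]

end TwistedShift

section PartialSum

variable {k : ℕ}

def partialSum (j : Fin k) : (Fin k → ZMod 2) →+ ZMod 2 where
  toFun y := ∑ t ∈ Finset.univ.filter (fun t => t ≤ j), y t
  map_zero' := by simp
  map_add' y z := by simp [Finset.sum_add_distrib]

theorem partialSum_single (j j' : Fin k) :
    partialSum j (Pi.single j' 1) = if j' ≤ j then 1 else 0 := by
  simp [partialSum, Finset.sum_pi_single']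

theorem single_add_self (j : Fin k) : (Pi.single j 1 : Fin k → ZMod 2) + Pi.single j 1 = 0 := by
  rw [← Pi.single_add, CharTwo.add_self_eq_zero, Pi.single_zero]

theorem AddMonoidHom.add_self_eq_zero_of_zmod_two {G : Type*} [AddCommMonoid G]
    (φ : G →+ ZMod 2) : φ + φ = 0 := by
  ext y
  exact CharTwo.add_self_eq_zero (φ y)

end PartialSum

section PartialSumShift

variable {k : ℕ} {R : Type*} [CommRing R] (χ : AddChar (ZMod 2) R)

abbrev partialSumShift (j : Fin k) : Matrix (Fin k → ZMod 2) (Fin k → ZMod 2) R :=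
  twistedShift χ (Pi.single j 1) (partialSum j)

variable {χ}

theorem partialSumShift_mul_self (hχ : χ 1 = -1) (j : Fin k) :
    partialSumShift χ j * partialSumShift χ j = -1 := by
  rw [twistedShift_mul_self χ (single_add_self j) (AddMonoidHom.add_self_eq_zero_of_zmod_two _),
    partialSum_single, if_pos le_rfl, hχ, neg_one_smul]

theorem partialSumShift_mul_partialSumShift_mul_self (hχ : χ 1 = -1) {j j' : Fin k}
    (h : j ≠ j') :
    partialSumShift χ j' * partialSumShift χ j * (partialSumShift χ j' * partialSumShift χ j) =
      -1 := by
  have hsq : χ (partialSum j' (Pi.single j 1)) * χ (partialSum j' (Pi.single j 1)) = 1 := by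
    rw [← AddChar.map_add_eq_mul, CharTwo.add_self_eq_zero, AddChar.map_zero_eq_one]
  have hsum : (partialSum j' + partialSum j) (Pi.single j' 1 + Pi.single j 1) = 1 := by
    simp only [AddMonoidHom.add_apply, map_add, partialSum_single, le_refl, if_true]
    rcases h.lt_or_gt with hlt | hlt
    · rw [if_pos hlt.le, if_neg (not_le_of_gt hlt)]; decide
    · rw [if_neg (not_le_of_gt hlt), if_pos hlt.le]; decide
  rw [twistedShift_mul_twistedShift, smul_mul_smul_comm,
    twistedShift_mul_self χ
      (by rw [add_add_add_comm, single_add_self, single_add_self, add_zero])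
      (AddMonoidHom.add_self_eq_zero_of_zmod_two _),
    hsq, hsum, hχ, one_smul, neg_one_smul]

end PartialSumShift

theorem construction1_MDS_r2_F3_general (k : ℕ) :
    let Q : Fin k → Matrix (Fin k → ZMod 2) (Fin k → ZMod 2) (ZMod 3) := fun j =>
      Matrix.of fun x y =>
        if x = y + Pi.single j 1 then
          (if (∑ t ∈ Finset.univ.filter (fun t => t ≤ j), y t) = 0 then 2 else 1)
        else 0
    (∀ j : Fin k, IsUnit (Q j).det) ∧
    (∀ j j' : Fin k, j ≠ j' →
      IsUnit (Matrix.fromBlocks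
        (1 : Matrix (Fin k → ZMod 2) (Fin k → ZMod 2) (ZMod 3)) 1 (Q j) (Q j')).det) := by
  intro Q
  let χ := AddChar.zmodChar 2 (show (-1 : ZMod 3) ^ 2 = 1 by decide)
  have hχ : χ 1 = -1 := by decide
  have hcoeff : ∀ s : ZMod 2, (if s = 0 then 2 else 1) = -χ s := by decide
  have hQ : ∀ j, Q j = -partialSumShift χ j := by
    intro j
    ext x y
    by_cases hx : x = y + Pi.single j 1 <;> simp [Q, twistedShift, partialSum, hx, hcoeff]
  have hsq : ∀ j, Q j * Q j = -1 := fun j => by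
    rw [hQ, neg_mul_neg, partialSumShift_mul_self hχ]
  refine ⟨fun j => isUnit_det_of_right_inverse (B := -Q j) (by rw [mul_neg, hsq, neg_neg]),
    fun j j' hjj' => ?_⟩
  rw [det_fromBlocks_one₁₁, Matrix.mul_one]
  refine isUnit_det_sub_of_mul_self_eq_neg_one (IsUnit.of_mul_eq_one (2 : ZMod 3) (by decide))
    (hsq j) ?_
  rw [hQ, hQ, neg_mul_neg, partialSumShift_mul_partialSumShift_mul_self hχ hjj']

/-- Over `F_3 = ZMod 3`, with `Q j` the coefficient-modified
permutation matrix of `x ↦ x + e j` on `(ZMod 2)^k` (entry `2` when the partial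
sum `y 1 + ⋯ + y j` vanishes, entry `1` otherwise), each `Q j` is invertible and
for `j ≠ j'` the block matrix `[[I, I], [Q j, Q j']]` is invertible: with `r = 2`
parities, this assignment over the field of size 3 makes Construction 1 MDS. -/
theorem construction1_MDS_r2_F3 (k : ℕ) (hk : 2 ≤ k) :
    let Q : Fin k → Matrix (Fin k → ZMod 2) (Fin k → ZMod 2) (ZMod 3) := fun j =>
      Matrix.of fun x y =>
        if x = y + Pi.single j 1 then
          (if (∑ t ∈ Finset.univ.filter (fun t => t ≤ j), y t) = 0 then 2 else 1)
        else 0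
    (∀ j : Fin k, IsUnit (Q j).det) ∧
    (∀ j j' : Fin k, j ≠ j' →
      IsUnit (Matrix.fromBlocks
        (1 : Matrix (Fin k → ZMod 2) (Fin k → ZMod 2) (ZMod 3)) 1 (Q j) (Q j')).det) :=
  construction1_MDS_r2_F3_general k
end
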